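/- Let Φ be a 2-uniform unique-sink orientation of the n-cube, and let v be a vertex with v_i = 1 such that the coordinate-i edge at v is incoming (v⊕i → v). Then for any out-neighbor u = v⊕j of v (whether v_j = 0 or v_j = 1), the coordinate-i edge at u is also incoming (u⊕i → u). -/
import Mathlib


/-- Flip coordinate `i` of a cube vertex. -/
def cflip {n : ℕ} (v : Fin n → Bool) (i : Fin n) : Fin n → Bool :=
  fun j => if j = i then !v j else v j

/-- `Φ v i = true` means the edge between `v` and `v ⊕ i` is incoming at `v` (sign `+`);
`Φ v i = false` means it is outgoing at `v` (sign `-`). Consistency says the two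
endpoints of an edge agree about its direction. -/
def Consistent {n : ℕ} (Φ : (Fin n → Bool) → Fin n → Bool) : Prop :=
  ∀ v i, Φ (cflip v i) i ≠ Φ v i

/-- `w` lies in the subcube spanned from `u` by the coordinate set `C`. -/
def InSubcube {n : ℕ} (u : Fin n → Bool) (C : Finset (Fin n)) (w : Fin n → Bool) : Prop :=
  ∀ j ∉ C, w j = u j

/-- Every (nonempty) subcube has a unique sink. -/
def HasUniqueSinks {n : ℕ} (Φ : (Fin n → Bool) → Fin n → Bool) : Prop :=
  ∀ (u : Fin n → Bool) (C : Finset (Fin n)),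
    ∃! w, InSubcube u C w ∧ ∀ i ∈ C, Φ w i = true

/-- A unique-sink orientation of the `n`-cube. -/
def IsUSO {n : ℕ} (Φ : (Fin n → Bool) → Fin n → Bool) : Prop :=
  Consistent Φ ∧ HasUniqueSinks Φ

/-- Directed edge relation of the orientation: `v → u`. -/
def Step {n : ℕ} (Φ : (Fin n → Bool) → Fin n → Bool) (v u : Fin n → Bool) : Prop :=
  ∃ i, Φ v i = false ∧ u = cflip v i

/-- `Φ` is 2-up-uniform: whenever `u` has `u i = u j = 0` (`i ≠ j`) and `u` is
the source of the 2-dimensional subcube spanned by coordinates `i, j`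
(both edges at `u` outgoing), that subcube is uniformly oriented, i.e. its two
upper edges are also directed from the `0`-side to the `1`-side. -/
def TwoUpUniform {n : ℕ} (Φ : (Fin n → Bool) → Fin n → Bool) : Prop :=
  ∀ (u : Fin n → Bool) (i j : Fin n), i ≠ j →
    u i = false → u j = false →
    Φ u i = false → Φ u j = false →
    Φ (cflip u i) j = false ∧ Φ (cflip u j) i = false

/-- The orientation obtained from `Φ` by reversing all edges. -/
def reverseAll {n : ℕ} (Φ : (Fin n → Bool) → Fin n → Bool) :
    (Fin n → Bool) → Fin n → Bool :=
  fun v i => !(Φ v i)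

/-- `Φ` is 2-uniform: both `Φ` and its total reversal are 2-up-uniform. -/
def TwoUniform {n : ℕ} (Φ : (Fin n → Bool) → Fin n → Bool) : Prop :=
  TwoUpUniform Φ ∧ TwoUpUniform (reverseAll Φ)

lemma cflip_cflip_self {n : ℕ} (v : Fin n → Bool) (i : Fin n) :
    cflip (cflip v i) i = v := by
  funext k; by_cases h : k = i <;> simp [cflip, h]

lemma cflip_comm {n : ℕ} (v : Fin n → Bool) (i j : Fin n) :
    cflip (cflip v i) j = cflip (cflip v j) i := by
  funext k
  by_cases h1 : k = i <;> by_cases h2 : k = j <;> simp_all [cflip]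

lemma bool_ne_eq_not {x y : Bool} (h : ¬x = y) : x = !y := by
  cases x <;> cases y <;> simp_all

lemma cflip_apply_self {n : ℕ} (v : Fin n → Bool) (i : Fin n) :
    cflip v i i = !v i := by simp [cflip]

lemma cflip_apply_ne {n : ℕ} (v : Fin n → Bool) (i k : Fin n) (h : k ≠ i) :
    cflip v i k = v k := by simp [cflip, h]

/-- in a 2-uniform USO, if `v i = 1` and the coordinate-`i` edge at
`v` is incoming, then for any out-neighbor `u = v ⊕ j` of `v` (whether `v j = 0`
or `v j = 1`), the coordinate-`i` edge at `u` is also incoming. -/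
theorem twoUniform_plus_persists {n : ℕ} (Φ : (Fin n → Bool) → Fin n → Bool)
    (huso : IsUSO Φ) (huni : TwoUniform Φ)
    (v : Fin n → Bool) (i j : Fin n)
    (hvi : v i = true) (hin : Φ v i = true)
    (hout : Φ v j = false) :
    Φ (cflip v j) i = true := by
  obtain ⟨hcons, hsinks⟩ := huso
  obtain ⟨hup, hdown⟩ := huni
  by_cases hij : i = j
  · subst hij; rw [hin] at hout; exact absurd hout (by simp)
  set a := cflip v i with ha
  set b := cflip v j with hb
  have hai : Φ a i = false := by
    have h := hcons v i; rw [hin] at h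
    simpa using h
  have hbj : Φ b j = true := by
    have h := hcons v j; rw [hout] at h
    simpa using h
  by_contra hgoal
  have hbi : Φ b i = false := by simpa using hgoal
  set c := cflip b i with hc
  have hci : Φ c i = true := by
    have h := hcons b i; rw [hbi] at h
    simpa using h
  have hcab : c = cflip a j := by
    rw [hc, ha, hb, cflip_comm v j i]
  have hAi : a i = !v i := cflip_apply_self v i
  have hAj : a j = v j := cflip_apply_ne v i j (Ne.symm hij)
  have hBi : b i = v i := cflip_apply_ne v j i hij
  have hCi : c i = !v i := by rw [hc, cflip_apply_self, hBi]
  have haj : Φ a j = false := by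
    by_contra haj'
    have haj2 : Φ a j = true := by simpa using haj'
    have hcj : Φ c j = false := by
      have h := hcons a j; rw [haj2, ← hcab] at h
      simpa using h
    obtain ⟨w, ⟨hwsub, hwsink⟩, -⟩ := hsinks v {i, j}
    have hwi := hwsink i (by simp)
    have hwj := hwsink j (by simp)
    have hkv : ∀ k, k ≠ i → k ≠ j → w k = v k := by
      intro k h1 h2
      exact hwsub k (by simp [h1, h2])
    have h4 : w = v ∨ w = a ∨ w = b ∨ w = c := by
      by_cases e1 : w i = v i <;> by_cases e2 : w j = v j
      · left; funext k
        by_cases k1 : k = i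
        · subst k1; exact e1
        by_cases k2 : k = j
        · subst k2; exact e2
        · exact hkv k k1 k2
      · right; right; left; funext k
        by_cases k1 : k = i
        · subst k1; rw [hBi]; exact e1
        by_cases k2 : k = j
        · subst k2
          rw [hb, cflip_apply_self]
          exact bool_ne_eq_not e2
        · rw [hb, cflip_apply_ne v j k k2]; exact hkv k k1 k2
      · right; left; funext k
        by_cases k1 : k = i
        · subst k1; rw [hAi]
          exact bool_ne_eq_not e1
        by_cases k2 : k = j
        · subst k2; rw [hAj]; exact e2
        · rw [ha, cflip_apply_ne v i k k1]; exact hkv k k1 k2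
      · right; right; right; funext k
        by_cases k1 : k = i
        · subst k1; rw [hCi]
          exact bool_ne_eq_not e1
        by_cases k2 : k = j
        · subst k2; rw [hcab, cflip_apply_self, hAj]
          exact bool_ne_eq_not e2
        · rw [hcab, cflip_apply_ne _ j k k2, ha, cflip_apply_ne v i k k1]
          exact hkv k k1 k2
    rcases h4 with rfl | rfl | rfl | rfl
    · rw [hout] at hwj; exact absurd hwj (by simp)
    · rw [hai] at hwi; exact absurd hwi (by simp)
    · rw [hbi] at hwi; exact absurd hwi (by simp)
    · rw [hcj] at hwj; exact absurd hwj (by simp)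
  have hcj : Φ c j = true := by
    have h := hcons a j; rw [haj, ← hcab] at h
    simpa using h
  cases hvj : v j with
  | false =>
    have h2 := (hup a i j hij (by simp [hAi, hvi]) (by simp [hAj, hvj]) hai haj).2
    rw [← hcab, hci] at h2
    exact absurd h2 (by simp)
  | true =>
    have hCj : c j = false := by
      rw [hcab, cflip_apply_self, hAj, hvj]; rfl
    have h2 := (hdown c i j hij (by simp [hCi, hvi]) hCj
      (by simp [reverseAll, hci]) (by simp [reverseAll, hcj])).2
    rw [hcab, cflip_cflip_self] at h2
    simp only [reverseAll, hai] at h2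
    exact absurd h2 (by simp)
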